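/- arXiv:2010.07068 — 6 statements merged into one kernel-verified Lean document; each statement's English description precedes it below -/
import Mathlib

section
/- Let u : ℝ³ → ℝ be continuously differentiable, let q₀,…,q_N ∈ ℝ³ and t₁,…,t_N > 0 with Σ_{n=1}^N t_n = T, and let q : [0,T] → ℝ³ be the associated piecewise-linear trajectory. Suppose D > 0 satisfies ‖∇u(x)‖ ≤ D for every point x on any segment [q_{n−1}, q_n], and let E > 0 be a prescribed maximum tolerable approximation error. If ‖q_n − q_{n−1}‖ ≤ 2E/(D·T) for every n = 1,…,N, then |∫₀^T u(q(t)) dt − Σ_{n=1}^N t_n u(q_n)| ≤ E. -/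
/-! By the mean value inequality, where a fraction `θ` of the `n`-th segment is still ahead,
`u ∘ q` differs from `u (w n)` by at most `θ D ‖w n - w (n - 1)‖`. Integrating over the segment,
the right-endpoint rule errs there by at most `D ‖w n - w (n - 1)‖ τ n / 2 ≤ τ n E / T`, and
these errors add up to at most `E`. -/

open MeasureTheory Set

theorem Finset.sum_Icc_one_eq_sum_range {M : Type*} [AddCommMonoid M] (f : ℕ → M) (N : ℕ) :
    ∑ n ∈ Finset.Icc 1 N, f n = ∑ i ∈ Finset.range N, f (i + 1) := by
  rw [Finset.range_eq_Ico, Finset.sum_Ico_add', Finset.Ico_add_one_right_eq_Icc]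

theorem norm_gradient_eq_norm_fderiv {F : Type*} [NormedAddCommGroup F] [InnerProductSpace ℝ F]
    [CompleteSpace F] (u : F → ℝ) (x : F) : ‖gradient u x‖ = ‖fderiv ℝ u x‖ :=
  (InnerProductSpace.toDual ℝ F).symm.norm_map _

theorem norm_fderiv_le_on_segment_of_norm_gradient_le {F : Type*} [NormedAddCommGroup F]
    [InnerProductSpace ℝ F] [CompleteSpace F] {u : F → ℝ} {x y : F} {D : ℝ}
    (h : ∀ s ∈ Icc (0 : ℝ) 1, ‖gradient u ((1 - s) • x + s • y)‖ ≤ D) :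
    ∀ z ∈ segment ℝ x y, ‖fderiv ℝ u z‖ ≤ D := by
  rw [segment_eq_image]
  rintro _ ⟨s, hs, rfl⟩
  exact norm_gradient_eq_norm_fderiv u _ ▸ h s hs

theorem intervalIntegrable_comp_of_eqOn_affine {F G : Type*} [NormedAddCommGroup F]
    [NormedSpace ℝ F] [NormedAddCommGroup G] {u : F → G} (hu : Continuous u) {x y : F}
    {a b τ : ℝ} (hab : a ≤ b) {q : ℝ → F}
    (hq : ∀ t ∈ Icc a b, q t = x + ((t - a) / τ) • (y - x)) :
    IntervalIntegrable (fun t => u (q t)) volume a b :=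
  (hu.comp_continuousOn (ContinuousOn.congr (by fun_prop) hq)).intervalIntegrable_of_Icc hab

section

variable {F G : Type*} [NormedAddCommGroup F] [NormedSpace ℝ F]
  [NormedAddCommGroup G] [NormedSpace ℝ G]

theorem norm_sub_le_of_norm_fderiv_le_on_segment {u : F → G} {x y : F} {D s : ℝ}
    (hu : ∀ z ∈ segment ℝ x y, DifferentiableAt ℝ u z)
    (hD : ∀ z ∈ segment ℝ x y, ‖fderiv ℝ u z‖ ≤ D) (hs : s ∈ Icc (0 : ℝ) 1) :
    ‖u (x + s • (y - x)) - u y‖ ≤ D * ((1 - s) * ‖y - x‖) := by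
  have hmem : x + s • (y - x) ∈ segment ℝ x y :=
    segment_eq_image' ℝ x y ▸ mem_image_of_mem _ hs
  rw [norm_sub_rev]
  calc ‖u y - u (x + s • (y - x))‖ ≤ D * ‖y - (x + s • (y - x))‖ :=
        (convex_segment x y).norm_image_sub_le_of_norm_fderiv_le hu hD hmem
          (right_mem_segment ℝ x y)
    _ = D * ((1 - s) * ‖y - x‖) := by
        rw [show y - (x + s • (y - x)) = (1 - s) • (y - x) by module, norm_smul,
          Real.norm_of_nonneg (sub_nonneg.2 hs.2)]

theorem norm_intervalIntegral_sub_smul_le [CompleteSpace G] {f : ℝ → G}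
    {a τ K : ℝ} {c : G} (hτ : 0 ≤ τ)
    (hf : IntervalIntegrable f volume a (a + τ))
    (hfc : ∀ t ∈ Icc a (a + τ), ‖f t - c‖ ≤ K * (a + τ - t)) :
    ‖(∫ t in a..a + τ, f t) - τ • c‖ ≤ K * τ ^ 2 / 2 := by
  have hle : a ≤ a + τ := le_add_of_nonneg_right hτ
  calc ‖(∫ t in a..a + τ, f t) - τ • c‖ = ‖∫ t in a..a + τ, (f t - c)‖ := by
        rw [intervalIntegral.integral_sub hf intervalIntegrable_const,
          intervalIntegral.integral_const, add_sub_cancel_left]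
    _ ≤ ∫ t in a..a + τ, K * (a + τ - t) :=
        intervalIntegral.norm_integral_le_of_norm_le hle
          (ae_of_all _ fun t ht => hfc t (Ioc_subset_Icc_self ht))
          (Continuous.intervalIntegrable (by fun_prop) _ _)
    _ = ∫ t in (0 : ℝ)..τ, K * t := by
        rw [intervalIntegral.integral_comp_sub_left (fun t => K * t) (a + τ)]
        simp
    _ = K * τ ^ 2 / 2 := by
        rw [intervalIntegral.integral_const_mul, integral_id]
        ring

theorem norm_integral_comp_affine_sub_le [CompleteSpace G] {u : F → G}
    {x y : F} {a τ D : ℝ} (hτ : 0 < τ)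
    (hu : Differentiable ℝ u) (hD : ∀ z ∈ segment ℝ x y, ‖fderiv ℝ u z‖ ≤ D) {q : ℝ → F}
    (hq : ∀ t ∈ Icc a (a + τ), q t = x + ((t - a) / τ) • (y - x)) :
    ‖(∫ t in a..a + τ, u (q t)) - τ • u y‖ ≤ D * ‖y - x‖ * τ / 2 := by
  have hbound : ∀ t ∈ Icc a (a + τ), ‖u (q t) - u y‖ ≤ D * ‖y - x‖ / τ * (a + τ - t) := by
    intro t ht
    have hs : (t - a) / τ ∈ Icc (0 : ℝ) 1 :=
      ⟨div_nonneg (by linarith [ht.1]) hτ.le, (div_le_one hτ).2 (by linarith [ht.2])⟩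
    rw [hq t ht]
    refine (norm_sub_le_of_norm_fderiv_le_on_segment (fun z _ => hu z) hD hs).trans_eq ?_
    field_simp
    ring
  refine (norm_intervalIntegral_sub_smul_le hτ.le
    (intervalIntegrable_comp_of_eqOn_affine hu.continuous (by linarith) hq) hbound).trans_eq ?_
  field_simp

theorem norm_integral_sub_sum_le_sum_norm {f : ℝ → G} {a : ℕ → ℝ} {N : ℕ}
    (hf : ∀ k < N, IntervalIntegrable f volume (a k) (a (k + 1))) (g : ℕ → G) :
    ‖(∫ t in a 0..a N, f t) - ∑ k ∈ Finset.range N, g k‖ ≤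
      ∑ k ∈ Finset.range N, ‖(∫ t in a k..a (k + 1), f t) - g k‖ := by
  rw [← intervalIntegral.sum_integral_adjacent_intervals hf, ← Finset.sum_sub_distrib]
  exact norm_sum_le _ _

theorem norm_integral_piecewise_affine_sub_sum_le [CompleteSpace G]
    {u : F → G} (hu : Differentiable ℝ u) {N : ℕ} {x : ℕ → F} {τ : ℕ → ℝ}
    (hτ : ∀ i < N, 0 < τ i) {D : ℝ}
    (hD : ∀ i < N, ∀ z ∈ segment ℝ (x i) (x (i + 1)), ‖fderiv ℝ u z‖ ≤ D) {q : ℝ → F}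
    (hq : ∀ i < N, ∀ t ∈ Icc (∑ j ∈ Finset.range i, τ j) (∑ j ∈ Finset.range (i + 1), τ j),
      q t = x i + ((t - ∑ j ∈ Finset.range i, τ j) / τ i) • (x (i + 1) - x i)) :
    ‖(∫ t in (0 : ℝ)..∑ i ∈ Finset.range N, τ i, u (q t)) -
        ∑ i ∈ Finset.range N, τ i • u (x (i + 1))‖ ≤
      ∑ i ∈ Finset.range N, D * ‖x (i + 1) - x i‖ * τ i / 2 := by
  set S : ℕ → ℝ := fun i => ∑ j ∈ Finset.range i, τ j
  have hS_succ (i : ℕ) : S (i + 1) = S i + τ i := Finset.sum_range_succ τ i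
  have hq' (i : ℕ) (hi : i < N) : ∀ t ∈ Icc (S i) (S i + τ i),
      q t = x i + ((t - S i) / τ i) • (x (i + 1) - x i) :=
    hS_succ i ▸ hq i hi
  have hint (i : ℕ) (hi : i < N) :
      IntervalIntegrable (fun t => u (q t)) volume (S i) (S (i + 1)) := by
    rw [hS_succ]
    exact intervalIntegrable_comp_of_eqOn_affine hu.continuous
      (le_add_of_nonneg_right (hτ i hi).le) (hq' i hi)
  calc _ = ‖(∫ t in S 0..S N, u (q t)) - ∑ i ∈ Finset.range N, τ i • u (x (i + 1))‖ := by
        simp [S]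
    _ ≤ _ := norm_integral_sub_sum_le_sum_norm hint _
    _ ≤ _ := Finset.sum_le_sum fun i hi => by
        rw [hS_succ]
        exact norm_integral_comp_affine_sub_le (hτ i (Finset.mem_range.1 hi)) hu
          (hD i (Finset.mem_range.1 hi)) (hq' i (Finset.mem_range.1 hi))

end

theorem finite_sum_approximation_error_within_tolerance_general
    (u : EuclideanSpace ℝ (Fin 3) → ℝ) (hu : ContDiff ℝ 1 u)
    (N : ℕ) (hN : 1 ≤ N)
    (w : ℕ → EuclideanSpace ℝ (Fin 3)) (τ : ℕ → ℝ)
    (hτ : ∀ n, 1 ≤ n → n ≤ N → 0 < τ n)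
    (T : ℝ) (hT : T = ∑ n ∈ Finset.Icc 1 N, τ n)
    (q : ℝ → EuclideanSpace ℝ (Fin 3))
    (hq : ∀ n, 1 ≤ n → n ≤ N →
      ∀ t ∈ Set.Icc (∑ m ∈ Finset.Icc 1 (n - 1), τ m) (∑ m ∈ Finset.Icc 1 n, τ m),
        q t = w (n - 1) +
          ((t - ∑ m ∈ Finset.Icc 1 (n - 1), τ m) / τ n) • (w n - w (n - 1)))
    (D : ℝ) (hD : 0 < D)
    (hgrad : ∀ n, 1 ≤ n → n ≤ N → ∀ s ∈ Set.Icc (0 : ℝ) 1,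
      ‖gradient u ((1 - s) • w (n - 1) + s • w n)‖ ≤ D)
    (E : ℝ)
    (hseg : ∀ n, 1 ≤ n → n ≤ N → ‖w n - w (n - 1)‖ ≤ 2 * E / (D * T)) :
    |(∫ t in (0 : ℝ)..T, u (q t)) - ∑ n ∈ Finset.Icc 1 N, τ n * u (w n)| ≤ E := by
  have hT_pos : 0 < T := hT ▸ Finset.sum_pos (fun n hn => hτ n (Finset.mem_Icc.1 hn).1
    (Finset.mem_Icc.1 hn).2) ⟨1, Finset.mem_Icc.2 ⟨le_rfl, hN⟩⟩
  have hT_range : T = ∑ i ∈ Finset.range N, τ (i + 1) :=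
    hT.trans (Finset.sum_Icc_one_eq_sum_range τ N)
  have hgrad' : ∀ i < N, ∀ z ∈ segment ℝ (w i) (w (i + 1)), ‖fderiv ℝ u z‖ ≤ D := fun i hi =>
    norm_fderiv_le_on_segment_of_norm_gradient_le (hgrad (i + 1) (Nat.le_add_left 1 i) hi)
  have hq' : ∀ i < N, ∀ t ∈ Icc (∑ j ∈ Finset.range i, τ (j + 1))
      (∑ j ∈ Finset.range (i + 1), τ (j + 1)), q t = w i +
        ((t - ∑ j ∈ Finset.range i, τ (j + 1)) / τ (i + 1)) • (w (i + 1) - w i) := by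
    intro i hi
    simpa [Finset.sum_Icc_one_eq_sum_range] using hq (i + 1) (Nat.le_add_left 1 i) hi
  calc |(∫ t in (0 : ℝ)..T, u (q t)) - ∑ n ∈ Finset.Icc 1 N, τ n * u (w n)|
      ≤ ∑ i ∈ Finset.range N, D * ‖w (i + 1) - w i‖ * τ (i + 1) / 2 := by
        simpa [hT_range, Finset.sum_Icc_one_eq_sum_range] using
          norm_integral_piecewise_affine_sub_sum_le (hu.differentiable one_ne_zero)
            (fun i hi => hτ (i + 1) (Nat.le_add_left 1 i) hi) hgrad' hq'
    _ ≤ ∑ i ∈ Finset.range N, D * (2 * E / (D * T)) * τ (i + 1) / 2 := by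
        gcongr with i hi
        · exact (hτ (i + 1) (Nat.le_add_left 1 i) (Finset.mem_range.1 hi)).le
        · simpa using hseg (i + 1) (Nat.le_add_left 1 i) (Finset.mem_range.1 hi)
    _ = E := by
        rw [← Finset.sum_div, ← Finset.mul_sum, ← hT_range]
        field_simp

/-- If the segment lengths of a piecewise-linear trajectory do
not exceed `2E/(D·T)`, where `D > 0` bounds the gradient norm of the utility
`u` along all segments and `E > 0` is the prescribed maximum tolerable
approximation error, then the finite-sum approximation error is at most `E`. -/
theorem finite_sum_approximation_error_within_tolerance
    (u : EuclideanSpace ℝ (Fin 3) → ℝ) (hu : ContDiff ℝ 1 u)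
    (N : ℕ) (hN : 1 ≤ N)
    (w : ℕ → EuclideanSpace ℝ (Fin 3)) (τ : ℕ → ℝ)
    (hτ : ∀ n, 1 ≤ n → n ≤ N → 0 < τ n)
    (T : ℝ) (hT : T = ∑ n ∈ Finset.Icc 1 N, τ n)
    (q : ℝ → EuclideanSpace ℝ (Fin 3))
    (hq : ∀ n, 1 ≤ n → n ≤ N →
      ∀ t ∈ Set.Icc (∑ m ∈ Finset.Icc 1 (n - 1), τ m) (∑ m ∈ Finset.Icc 1 n, τ m),
        q t = w (n - 1) +
          ((t - ∑ m ∈ Finset.Icc 1 (n - 1), τ m) / τ n) • (w n - w (n - 1)))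
    (D : ℝ) (hD : 0 < D)
    (hgrad : ∀ n, 1 ≤ n → n ≤ N → ∀ s ∈ Set.Icc (0 : ℝ) 1,
      ‖gradient u ((1 - s) • w (n - 1) + s • w n)‖ ≤ D)
    (E : ℝ) (hE : 0 < E)
    (hseg : ∀ n, 1 ≤ n → n ≤ N → ‖w n - w (n - 1)‖ ≤ 2 * E / (D * T)) :
    |(∫ t in (0 : ℝ)..T, u (q t)) - ∑ n ∈ Finset.Icc 1 N, τ n * u (w n)| ≤ E :=
  finite_sum_approximation_error_within_tolerance_general u hu N hN w τ hτ T hT q hq D hD hgrad E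
    hseg
end

section
/- Let c₂ > 0 and H > 0, and define c₁ = sqrt( ( −(2H² + c₂) + sqrt(16H⁴ + 16c₂H² + c₂²) ) / 6 ). Then for all d ≥ 0 and all h ≥ H, d / ((d² + h²)(d² + h² + c₂)) ≤ c₁ / ((c₁² + H²)(c₁² + H² + c₂)), with equality if and only if h = H and d = c₁. -/
set_option maxHeartbeats 800000


/-- With `c₁` as in Appendix B of the paper, the function
`(d, h) ↦ d / ((d² + h²)(d² + h² + c₂))` over `d ≥ 0`, `h ≥ H` is maximized at
`(c₁, H)`, with equality in the bound if and only if `h = H` and `d = c₁`. -/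
theorem gradient_factor_maximized_at_c1
    (c₂ H : ℝ) (hc : 0 < c₂) (hH : 0 < H)
    (c₁ : ℝ)
    (hc₁ : c₁ = Real.sqrt
      ((-(2 * H ^ 2 + c₂) + Real.sqrt (16 * H ^ 4 + 16 * c₂ * H ^ 2 + c₂ ^ 2)) / 6)) :
    ∀ d h : ℝ, 0 ≤ d → H ≤ h →
      d / ((d ^ 2 + h ^ 2) * (d ^ 2 + h ^ 2 + c₂)) ≤
        c₁ / ((c₁ ^ 2 + H ^ 2) * (c₁ ^ 2 + H ^ 2 + c₂)) ∧
      (d / ((d ^ 2 + h ^ 2) * (d ^ 2 + h ^ 2 + c₂)) =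
        c₁ / ((c₁ ^ 2 + H ^ 2) * (c₁ ^ 2 + H ^ 2 + c₂)) ↔ h = H ∧ d = c₁) := by
  have hS2 : Real.sqrt (16 * H ^ 4 + 16 * c₂ * H ^ 2 + c₂ ^ 2) ^ 2
      = 16 * H ^ 4 + 16 * c₂ * H ^ 2 + c₂ ^ 2 := Real.sq_sqrt (by positivity)
  have hSnn := Real.sqrt_nonneg (16 * H ^ 4 + 16 * c₂ * H ^ 2 + c₂ ^ 2)
  have hSgt : 2 * H ^ 2 + c₂ < Real.sqrt (16 * H ^ 4 + 16 * c₂ * H ^ 2 + c₂ ^ 2) := by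
    nlinarith [sq_nonneg H, mul_pos hc (mul_pos hH hH)]
  have hpos : 0 < (-(2 * H ^ 2 + c₂) + Real.sqrt (16 * H ^ 4 + 16 * c₂ * H ^ 2 + c₂ ^ 2)) / 6 := by
    linarith
  have hc1pos : 0 < c₁ := by rw [hc₁]; exact Real.sqrt_pos.mpr hpos
  have hc1sq : c₁ ^ 2
      = (-(2 * H ^ 2 + c₂) + Real.sqrt (16 * H ^ 4 + 16 * c₂ * H ^ 2 + c₂ ^ 2)) / 6 := by
    rw [hc₁]; exact Real.sq_sqrt hpos.le
  have h6 : 6 * c₁ ^ 2 + (2 * H ^ 2 + c₂)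
      = Real.sqrt (16 * H ^ 4 + 16 * c₂ * H ^ 2 + c₂ ^ 2) := by
    rw [hc1sq]; ring
  have h7 : (6 * c₁ ^ 2 + (2 * H ^ 2 + c₂)) ^ 2 = 16 * H ^ 4 + 16 * c₂ * H ^ 2 + c₂ ^ 2 := by
    rw [h6]; exact hS2
  have hkey : 3 * c₁ ^ 4 + (2 * H ^ 2 + c₂) * c₁ ^ 2 = H ^ 4 + c₂ * H ^ 2 := by
    linear_combination h7 / 12
  have hKpos : 0 < (c₁ ^ 2 + H ^ 2) * (c₁ ^ 2 + H ^ 2 + c₂) := by positivity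
  intro d h hd hh
  have hh0 : 0 < h := lt_of_lt_of_le hH hh
  have hh2 : H ^ 2 ≤ h ^ 2 := by nlinarith
  have hD0 : 0 < (d ^ 2 + H ^ 2) * (d ^ 2 + H ^ 2 + c₂) := by positivity
  have hDen : 0 < (d ^ 2 + h ^ 2) * (d ^ 2 + h ^ 2 + c₂) := by positivity
  -- the key algebraic identity
  have hdiff : c₁ * ((d ^ 2 + H ^ 2) * (d ^ 2 + H ^ 2 + c₂))
      - d * ((c₁ ^ 2 + H ^ 2) * (c₁ ^ 2 + H ^ 2 + c₂))
      = c₁ * (d - c₁) ^ 2 * (d ^ 2 + 2 * c₁ * d + (2 * H ^ 2 + c₂) + 3 * c₁ ^ 2) := by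
    linear_combination (d - c₁) * hkey
  have hQpos : 0 < d ^ 2 + 2 * c₁ * d + (2 * H ^ 2 + c₂) + 3 * c₁ ^ 2 := by
    nlinarith [sq_nonneg d, mul_nonneg hc1pos.le hd, sq_nonneg H, sq_nonneg c₁]
  have hFnn : 0 ≤ c₁ * (d - c₁) ^ 2 * (d ^ 2 + 2 * c₁ * d + (2 * H ^ 2 + c₂) + 3 * c₁ ^ 2) :=
    mul_nonneg (mul_nonneg hc1pos.le (sq_nonneg _)) hQpos.le
  have hP : d * ((c₁ ^ 2 + H ^ 2) * (c₁ ^ 2 + H ^ 2 + c₂))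
      ≤ c₁ * ((d ^ 2 + H ^ 2) * (d ^ 2 + H ^ 2 + c₂)) := by linarith
  have hmonoD : (d ^ 2 + H ^ 2) * (d ^ 2 + H ^ 2 + c₂)
      ≤ (d ^ 2 + h ^ 2) * (d ^ 2 + h ^ 2 + c₂) := by nlinarith [sq_nonneg d]
  have hmono : c₁ * ((d ^ 2 + H ^ 2) * (d ^ 2 + H ^ 2 + c₂))
      ≤ c₁ * ((d ^ 2 + h ^ 2) * (d ^ 2 + h ^ 2 + c₂)) := by
    exact mul_le_mul_of_nonneg_left hmonoD hc1pos.le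
  have hle : d / ((d ^ 2 + h ^ 2) * (d ^ 2 + h ^ 2 + c₂)) ≤
      c₁ / ((c₁ ^ 2 + H ^ 2) * (c₁ ^ 2 + H ^ 2 + c₂)) := by
    rw [div_le_div_iff₀ hDen hKpos]; linarith
  refine ⟨hle, ?_, ?_⟩
  · intro heq
    rw [div_eq_div_iff hDen.ne' hKpos.ne'] at heq
    have heq' : d * ((c₁ ^ 2 + H ^ 2) * (c₁ ^ 2 + H ^ 2 + c₂))
        = c₁ * ((d ^ 2 + h ^ 2) * (d ^ 2 + h ^ 2 + c₂)) := by linarith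
    rcases eq_or_lt_of_le hd with hd0 | hd0
    · exfalso
      have : c₁ * ((d ^ 2 + h ^ 2) * (d ^ 2 + h ^ 2 + c₂)) = 0 := by
        rw [← heq', ← hd0]; ring
      nlinarith [mul_pos hc1pos hDen]
    rcases eq_or_lt_of_le hh with hhH | hhH
    · -- h = H
      have hhH' : h = H := hhH.symm
      rw [hhH'] at heq'
      have h0 : c₁ * (d - c₁) ^ 2 * (d ^ 2 + 2 * c₁ * d + (2 * H ^ 2 + c₂) + 3 * c₁ ^ 2)
          = 0 := by linarith
      have hs : (d - c₁) ^ 2 = 0 := by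
        by_contra hne
        have hspos : 0 < (d - c₁) ^ 2 := lt_of_le_of_ne (sq_nonneg _) (Ne.symm hne)
        nlinarith [mul_pos (mul_pos hc1pos hspos) hQpos]
      have hdc : d - c₁ = 0 := by
        have := sq_eq_zero_iff.mp hs
        exact this
      exact ⟨hhH', by linarith⟩
    · -- h > H : contradiction
      exfalso
      have hsq : H ^ 2 < h ^ 2 := by nlinarith
      have hstrict : (d ^ 2 + H ^ 2) * (d ^ 2 + H ^ 2 + c₂)
          < (d ^ 2 + h ^ 2) * (d ^ 2 + h ^ 2 + c₂) := by
        nlinarith [mul_pos (sub_pos.mpr hsq)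
          (show (0:ℝ) < 2 * d ^ 2 + h ^ 2 + H ^ 2 + c₂ by positivity)]
      linarith [hP, mul_lt_mul_of_pos_left hstrict hc1pos, heq']
  · rintro ⟨rfl, rfl⟩
    rfl
end

section
/- Let c₂ > 0, H_min > 0, and w ∈ ℝ², and define c₁ = sqrt( ( −(2H_min² + c₂) + sqrt(16H_min⁴ + 16c₂H_min² + c₂²) ) / 6 ) and D_u = (2c₂/ln 2) · c₁ / ((c₁² + H_min²)(c₁² + H_min² + c₂)). Then for every altitude h ≥ H_min and every horizontal position p ∈ ℝ², the gradient of the rate function u_h(p) = log₂(1 + c₂/(‖p − w‖² + h²)) satisfies ‖∇u_h(p)‖ ≤ D_u, and this bound is attained (at h = H_min and ‖p − w‖ = c₁), so D_u = max over h ≥ H_min, p ∈ ℝ² of ‖∇u_h(p)‖. -/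
/-!
The gradient of `x ↦ φ (‖x - w‖²)` is `2 φ'(‖x - w‖²) • (x - w)`, so
`‖∇u_h(p)‖ = (2c₂ / ln 2) · r / ((r² + h²)(r² + h² + c₂))` with `r = ‖p - w‖`. This profile
decreases in `h²`, and in `r` it peaks at the positive root `c₁` of the stationarity equation
`3r⁴ + (2H_min² + c₂) r² = H_min⁴ + c₂ H_min²`: writing `D(r) = (r² + H_min²)(r² + H_min² + c₂)`,
that equation gives `c₁ D(r) - r D(c₁) = c₁ (r - c₁)² (r² + 2c₁r + 3c₁² + 2H_min² + c₂) ≥ 0`.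
-/

open Real

section Gradient

variable {E : Type*} [NormedAddCommGroup E] [InnerProductSpace ℝ E] [CompleteSpace E]

theorem HasDerivAt.hasGradientAt_comp_norm_sub_sq {φ : ℝ → ℝ} {φ' : ℝ} {w p : E}
    (hφ : HasDerivAt φ φ' (‖p - w‖ ^ 2)) :
    HasGradientAt (fun x => φ (‖x - w‖ ^ 2)) ((2 * φ') • (p - w)) p := by
  rw [hasGradientAt_iff_hasFDerivAt]
  refine (hφ.comp_hasFDerivAt p ((hasFDerivAt_id p).sub_const w).norm_sq).congr_fderiv ?_
  ext y
  simp
  ring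

theorem hasDerivAt_logb_one_add_div {c h t : ℝ} (hc : 0 ≤ c) (ht : 0 ≤ t) (hh : h ≠ 0) :
    HasDerivAt (fun t => logb 2 (1 + c / (t + h ^ 2)))
      (-c / (log 2 * ((t + h ^ 2) * (t + h ^ 2 + c)))) t := by
  have hden : 0 < t + h ^ 2 := by positivity
  have hinner : HasDerivAt (fun t => 1 + c / (t + h ^ 2)) (-c / (t + h ^ 2) ^ 2) t := by
    simpa using
      ((hasDerivAt_const t c).fun_div ((hasDerivAt_id t).add_const (h ^ 2)) hden.ne').const_add 1
  have hpos : 0 < 1 + c / (t + h ^ 2) := by positivity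
  refine ((hinner.log hpos.ne').div_const (log 2)).congr_deriv ?_
  field_simp

theorem hasGradientAt_logb_one_add_div {c h : ℝ} (w p : E) (hc : 0 ≤ c) (hh : h ≠ 0) :
    HasGradientAt (fun x => logb 2 (1 + c / (‖x - w‖ ^ 2 + h ^ 2)))
      ((-(2 * c) / (log 2 * ((‖p - w‖ ^ 2 + h ^ 2) * (‖p - w‖ ^ 2 + h ^ 2 + c)))) • (p - w))
      p := by
  convert (hasDerivAt_logb_one_add_div hc (by positivity) hh).hasGradientAt_comp_norm_sub_sq
    (w := w) (p := p) using 2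
  ring

noncomputable def gradProfile (a c r : ℝ) : ℝ := r / ((r ^ 2 + a) * (r ^ 2 + a + c))

theorem norm_gradient_logb_one_add_div {c h : ℝ} (w p : E) (hc : 0 ≤ c) (hh : h ≠ 0) :
    ‖gradient (fun x => logb 2 (1 + c / (‖x - w‖ ^ 2 + h ^ 2))) p‖
      = 2 * c / log 2 * gradProfile (h ^ 2) c ‖p - w‖ := by
  rw [gradProfile, (hasGradientAt_logb_one_add_div w p hc hh).gradient, norm_smul,
    Real.norm_of_nonpos (div_nonpos_of_nonpos_of_nonneg (by linarith) (by positivity))]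
  field_simp

end Gradient

theorem gradProfile_antitone {a b c r : ℝ} (ha : 0 < a) (hab : a ≤ b) (hc : 0 ≤ c)
    (hr : 0 ≤ r) : gradProfile b c r ≤ gradProfile a c r := by
  unfold gradProfile
  gcongr
  exact add_nonneg (sq_nonneg r) (ha.le.trans hab)

theorem gradProfile_le_of_critical {a c c₁ r : ℝ} (ha : 0 < a) (hc : 0 ≤ c) (hc₁ : 0 ≤ c₁)
    (hr : 0 ≤ r) (hcrit : 3 * c₁ ^ 4 + (2 * a + c) * c₁ ^ 2 = a ^ 2 + a * c) :
    gradProfile a c r ≤ gradProfile a c c₁ := by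
  have hfactor : c₁ * ((r ^ 2 + a) * (r ^ 2 + a + c)) - r * ((c₁ ^ 2 + a) * (c₁ ^ 2 + a + c))
      = c₁ * (r - c₁) ^ 2 * (r ^ 2 + 2 * c₁ * r + 3 * c₁ ^ 2 + 2 * a + c) := by
    linear_combination (r - c₁) * hcrit
  have hgap : 0 ≤ c₁ * (r - c₁) ^ 2 * (r ^ 2 + 2 * c₁ * r + 3 * c₁ ^ 2 + 2 * a + c) := by
    positivity
  unfold gradProfile
  rw [div_le_div_iff₀ (by positivity) (by positivity)]
  linarith

theorem pos_and_critical_of_eq_sqrt {a c c₁ : ℝ} (ha : 0 < a) (hc : 0 ≤ c)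
    (hc₁ : c₁ = √((-(2 * a + c) + √(16 * a ^ 2 + 16 * c * a + c ^ 2)) / 6)) :
    0 < c₁ ∧ 3 * c₁ ^ 4 + (2 * a + c) * c₁ ^ 2 = a ^ 2 + a * c := by
  set S := √(16 * a ^ 2 + 16 * c * a + c ^ 2)
  have hS : 2 * a + c < S := by
    rw [Real.lt_sqrt (by positivity)]
    nlinarith [mul_pos ha ha, mul_nonneg ha.le hc]
  have hS_sq : S ^ 2 = 16 * a ^ 2 + 16 * c * a + c ^ 2 := Real.sq_sqrt (by positivity)
  have hrad : 0 < (-(2 * a + c) + S) / 6 := by linarith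
  have hc₁_sq : c₁ ^ 2 = (-(2 * a + c) + S) / 6 := by rw [hc₁, Real.sq_sqrt hrad.le]
  refine ⟨hc₁ ▸ Real.sqrt_pos.2 hrad, ?_⟩
  linear_combination (1 / 12) * hS_sq + (3 * c₁ ^ 2 + a + c / 2 + S / 2) * hc₁_sq

/-- With `c₁` and `D_u` as in Example 1 / Appendix B of the
paper, the gradient norm of the rate function
`u_h(p) = log₂(1 + c₂/(‖p − w‖² + h²))` is bounded by `D_u` for every altitude
`h ≥ H_min` and every horizontal position `p`, and the bound is attained at
`h = H_min` and `‖p − w‖ = c₁`. -/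
theorem los_rate_gradient_norm_max
    (c₂ Hmin : ℝ) (hc : 0 < c₂) (hH : 0 < Hmin)
    (w : EuclideanSpace ℝ (Fin 2))
    (c₁ : ℝ)
    (hc₁ : c₁ = Real.sqrt
      ((-(2 * Hmin ^ 2 + c₂) +
        Real.sqrt (16 * Hmin ^ 4 + 16 * c₂ * Hmin ^ 2 + c₂ ^ 2)) / 6))
    (Du : ℝ)
    (hDu : Du = (2 * c₂ / Real.log 2) * c₁ /
      ((c₁ ^ 2 + Hmin ^ 2) * (c₁ ^ 2 + Hmin ^ 2 + c₂))) :
    (∀ h : ℝ, Hmin ≤ h → ∀ p : EuclideanSpace ℝ (Fin 2),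
      ‖gradient (fun x : EuclideanSpace ℝ (Fin 2) =>
        Real.logb 2 (1 + c₂ / (‖x - w‖ ^ 2 + h ^ 2))) p‖ ≤ Du) ∧
    (∃ p : EuclideanSpace ℝ (Fin 2), ‖p - w‖ = c₁ ∧
      ‖gradient (fun x : EuclideanSpace ℝ (Fin 2) =>
        Real.logb 2 (1 + c₂ / (‖x - w‖ ^ 2 + Hmin ^ 2))) p‖ = Du) := by
  have ha : 0 < Hmin ^ 2 := by positivity
  obtain ⟨hc₁_pos, hcrit⟩ :=
    pos_and_critical_of_eq_sqrt (c₁ := c₁) ha hc.le (by rw [hc₁]; ring_nf)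
  have hDu' : Du = 2 * c₂ / log 2 * gradProfile (Hmin ^ 2) c₂ c₁ := by
    rw [hDu, gradProfile, mul_div_assoc]
  refine ⟨fun h hh p => ?_, ?_⟩
  · rw [norm_gradient_logb_one_add_div w p hc.le (hH.trans_le hh).ne', hDu']
    gcongr
    calc gradProfile (h ^ 2) c₂ ‖p - w‖ ≤ gradProfile (Hmin ^ 2) c₂ ‖p - w‖ :=
          gradProfile_antitone ha (by gcongr) hc.le (norm_nonneg _)
      _ ≤ gradProfile (Hmin ^ 2) c₂ c₁ :=
          gradProfile_le_of_critical ha hc.le hc₁_pos.le (norm_nonneg _) hcrit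
  · obtain ⟨v, hv⟩ := exists_norm_eq (EuclideanSpace ℝ (Fin 2)) hc₁_pos.le
    have hpw : ‖w + v - w‖ = c₁ := by rw [add_sub_cancel_left, hv]
    refine ⟨w + v, hpw, ?_⟩
    rw [norm_gradient_logb_one_add_div w (w + v) hc.le hH.ne', hpw, hDu']
end

section
/- Let c₂ > 0 and for H > 0 define g(H) = sup over { (d, h) : d ≥ 0, h ≥ H } of d / ((d² + h²)(d² + h² + c₂)). Then g is strictly decreasing on (0, ∞); equivalently, the maximum-segment-length threshold Δ_max^U = 2E/(T·(2c₂/ln 2)·g(H)) (for any fixed E > 0, T > 0) is strictly increasing in the minimum altitude H. -/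
/-- The supremum
`g(H) = sup {d/((d² + h²)(d² + h² + c₂)) : d ≥ 0, h ≥ H}` is strictly
decreasing on `(0, ∞)`; equivalently, the maximum-segment-length threshold
`Δ_max^U = 2E/(T·(2c₂/ln 2)·g(H))` is strictly increasing in the minimum
altitude `H`, for any fixed `E > 0` and `T > 0`. -/
theorem max_segment_length_increasing_in_altitude
    (c₂ : ℝ) (hc : 0 < c₂)
    (g : ℝ → ℝ)
    (hg : ∀ H : ℝ, g H = sSup {y : ℝ | ∃ d h : ℝ, 0 ≤ d ∧ H ≤ h ∧
      y = d / ((d ^ 2 + h ^ 2) * (d ^ 2 + h ^ 2 + c₂))}) :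
    StrictAntiOn g (Set.Ioi (0 : ℝ)) ∧
      ∀ E T : ℝ, 0 < E → 0 < T →
        StrictMonoOn (fun H : ℝ => 2 * E / (T * (2 * c₂ / Real.log 2) * g H))
          (Set.Ioi (0 : ℝ)) := by
  have hbdd : ∀ H : ℝ, 0 < H → BddAbove {y : ℝ | ∃ d h : ℝ, 0 ≤ d ∧ H ≤ h ∧
      y = d / ((d ^ 2 + h ^ 2) * (d ^ 2 + h ^ 2 + c₂))} := by
    intro H hH
    refine ⟨1 / (2 * H * c₂), ?_⟩
    rintro y ⟨d, h, hd, hh, rfl⟩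
    have hh0 : 0 < h := hH.trans_le hh
    have hX : 0 < d ^ 2 + h ^ 2 := by nlinarith [sq_nonneg d, mul_pos hh0 hh0]
    have hden : 0 < (d ^ 2 + h ^ 2) * (d ^ 2 + h ^ 2 + c₂) :=
      mul_pos hX (by linarith)
    rw [div_le_div_iff₀ hden (by nlinarith : (0:ℝ) < 2 * H * c₂)]
    have key : 2 * d * H ≤ d ^ 2 + h ^ 2 := by
      nlinarith [sq_nonneg (d - H), mul_nonneg (sub_nonneg.2 hh) (by linarith : (0:ℝ) ≤ h + H)]
    nlinarith [mul_le_mul_of_nonneg_right key hc.le, sq_nonneg (d ^ 2 + h ^ 2)]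
  have hne : ∀ H : ℝ, ((0:ℝ) ∈ {y : ℝ | ∃ d h : ℝ, 0 ≤ d ∧ H ≤ h ∧
      y = d / ((d ^ 2 + h ^ 2) * (d ^ 2 + h ^ 2 + c₂))}) := by
    intro H
    exact ⟨0, H, le_refl _, le_refl _, by simp⟩
  have hgpos : ∀ H : ℝ, 0 < H → 0 < g H := by
    intro H hH
    have hden : 0 < (H ^ 2 + H ^ 2) * (H ^ 2 + H ^ 2 + c₂) := by
      have : 0 < H ^ 2 := by positivity
      apply mul_pos <;> linarith
    have hmem : H / ((H ^ 2 + H ^ 2) * (H ^ 2 + H ^ 2 + c₂)) ∈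
        {y : ℝ | ∃ d h : ℝ, 0 ≤ d ∧ H ≤ h ∧
          y = d / ((d ^ 2 + h ^ 2) * (d ^ 2 + h ^ 2 + c₂))} :=
      ⟨H, H, hH.le, le_refl _, rfl⟩
    have := le_csSup (hbdd H hH) hmem
    rw [hg]
    exact lt_of_lt_of_le (div_pos hH hden) this
  have hanti : StrictAntiOn g (Set.Ioi (0 : ℝ)) := by
    intro H₁ h₁ H₂ h₂ hlt
    simp only [Set.mem_Ioi] at h₁ h₂
    have hgp₁ : 0 < g H₁ := hgpos H₁ h₁
    obtain ⟨μ, hμ0, hμ1, hμH⟩ : ∃ μ : ℝ, 0 < μ ∧ μ < 1 ∧ μ * H₂ = H₁ :=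
      ⟨H₁ / H₂, div_pos h₁ h₂, (div_lt_one h₂).2 hlt,
        div_mul_cancel₀ _ (ne_of_gt h₂)⟩
    have hle : g H₂ ≤ μ * g H₁ := by
      rw [hg]
      apply csSup_le ⟨0, hne H₂⟩
      rintro y ⟨d, h, hd, hh, rfl⟩
      have hh0 : 0 < h := h₂.trans_le hh
      have hX : 0 < d ^ 2 + h ^ 2 := by nlinarith [sq_nonneg d, mul_pos hh0 hh0]
      have hH₁h : H₁ ≤ μ * h := by
        rw [← hμH]; exact mul_le_mul_of_nonneg_left hh hμ0.le
      have hmem : (μ * d) / (((μ * d) ^ 2 + (μ * h) ^ 2) * ((μ * d) ^ 2 + (μ * h) ^ 2 + c₂)) ∈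
          {y : ℝ | ∃ d h : ℝ, 0 ≤ d ∧ H₁ ≤ h ∧
            y = d / ((d ^ 2 + h ^ 2) * (d ^ 2 + h ^ 2 + c₂))} :=
        ⟨μ * d, μ * h, mul_nonneg hμ0.le hd, hH₁h, rfl⟩
      have hmemle : (μ * d) / (((μ * d) ^ 2 + (μ * h) ^ 2) * ((μ * d) ^ 2 + (μ * h) ^ 2 + c₂))
          ≤ g H₁ := by
        rw [hg]; exact le_csSup (hbdd H₁ h₁) hmem
      have hden2 : 0 < (d ^ 2 + h ^ 2) * (μ ^ 2 * (d ^ 2 + h ^ 2) + c₂) := by positivity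
      have h1μ : 0 < 1 - μ ^ 2 := by nlinarith
      calc d / ((d ^ 2 + h ^ 2) * (d ^ 2 + h ^ 2 + c₂))
          ≤ d / ((d ^ 2 + h ^ 2) * (μ ^ 2 * (d ^ 2 + h ^ 2) + c₂)) := by
            apply div_le_div_of_nonneg_left hd hden2
            nlinarith [mul_nonneg (mul_nonneg h1μ.le hX.le) hX.le]
        _ = μ * ((μ * d) / (((μ * d) ^ 2 + (μ * h) ^ 2) * ((μ * d) ^ 2 + (μ * h) ^ 2 + c₂))) := by
            have e : (μ * d) ^ 2 + (μ * h) ^ 2 = μ ^ 2 * (d ^ 2 + h ^ 2) := by ring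
            rw [e]
            have hne1 : (d ^ 2 + h ^ 2 : ℝ) ≠ 0 := hX.ne'
            have hne2 : (μ ^ 2 * (d ^ 2 + h ^ 2) + c₂ : ℝ) ≠ 0 := by positivity
            field_simp
        _ ≤ μ * g H₁ := mul_le_mul_of_nonneg_left hmemle hμ0.le
    calc g H₂ ≤ μ * g H₁ := hle
      _ < 1 * g H₁ := mul_lt_mul_of_pos_right hμ1 hgp₁
      _ = g H₁ := one_mul _
  refine ⟨hanti, ?_⟩
  intro E T hE hT H₁ h₁ H₂ h₂ hlt
  simp only [Set.mem_Ioi] at h₁ h₂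
  have hK : 0 < T * (2 * c₂ / Real.log 2) := by
    have : 0 < Real.log 2 := Real.log_pos one_lt_two
    positivity
  have hg₁ : 0 < g H₁ := hgpos H₁ h₁
  have hg₂ : 0 < g H₂ := hgpos H₂ h₂
  have hglt : g H₂ < g H₁ := hanti h₁ h₂ hlt
  simp only
  apply div_lt_div_of_pos_left (by linarith) (by positivity)
  exact mul_lt_mul_of_pos_left hglt hK
end

section
/- Let c₂ > 0 and h > 0. The function φ(d) = d / ((d² + h²)(d² + h² + c₂)) on [0, ∞) attains its maximum at a unique point, namely d = c₁(h) = sqrt( ( −(2h² + c₂) + sqrt(16h⁴ + 16c₂h² + c₂²) ) / 6 ); that is, φ(d) < φ(c₁(h)) for all d ≥ 0 with d ≠ c₁(h). -/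
/-- For fixed altitude `h > 0`, the function
`φ(d) = d / ((d² + h²)(d² + h² + c₂))` on `[0, ∞)` attains its maximum at the
unique point `d = c₁(h)`: `φ(d) < φ(c₁(h))` for all `d ≥ 0` with `d ≠ c₁(h)`. -/
theorem phi_unique_maximizer
    (c₂ h : ℝ) (hc : 0 < c₂) (hh : 0 < h)
    (c₁ : ℝ)
    (hc₁ : c₁ = Real.sqrt
      ((-(2 * h ^ 2 + c₂) + Real.sqrt (16 * h ^ 4 + 16 * c₂ * h ^ 2 + c₂ ^ 2)) / 6)) :
    ∀ d : ℝ, 0 ≤ d → d ≠ c₁ →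
      d / ((d ^ 2 + h ^ 2) * (d ^ 2 + h ^ 2 + c₂)) <
        c₁ / ((c₁ ^ 2 + h ^ 2) * (c₁ ^ 2 + h ^ 2 + c₂)) := by
  set D : ℝ := 16 * h ^ 4 + 16 * c₂ * h ^ 2 + c₂ ^ 2 with hD
  have hDpos : 0 < D := by positivity
  set s : ℝ := Real.sqrt D with hs
  have hs0 : 0 ≤ s := Real.sqrt_nonneg _
  have hs2 : s ^ 2 = D := Real.sq_sqrt hDpos.le
  have hs2' : s ^ 2 = 16 * h ^ 4 + 16 * c₂ * h ^ 2 + c₂ ^ 2 := by rw [hs2]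
  have hsgt : 2 * h ^ 2 + c₂ < s := by
    nlinarith [hs2', hs0, sq_nonneg (s - (2 * h ^ 2 + c₂)), mul_pos hh hh, mul_pos hc (mul_pos hh hh)]
  set u : ℝ := (-(2 * h ^ 2 + c₂) + s) / 6 with hu
  have hupos : 0 < u := by simp only [hu]; linarith
  have ha2 : c₁ ^ 2 = u := by rw [hc₁]; exact Real.sq_sqrt hupos.le
  have hapos : 0 < c₁ := by
    rw [hc₁]; exact Real.sqrt_pos.mpr hupos
  have key : 3 * c₁ ^ 4 + (2 * h ^ 2 + c₂) * c₁ ^ 2 = h ^ 4 + c₂ * h ^ 2 := by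
    have h4 : c₁ ^ 4 = u ^ 2 := by rw [show (4:ℕ) = 2*2 from rfl, pow_mul, ha2]
    rw [h4, ha2, hu]
    nlinarith [hs2]
  intro d hd hne
  have hQd : 0 < (d ^ 2 + h ^ 2) * (d ^ 2 + h ^ 2 + c₂) := by positivity
  have hQa : 0 < (c₁ ^ 2 + h ^ 2) * (c₁ ^ 2 + h ^ 2 + c₂) := by positivity
  rw [div_lt_div_iff₀ hQd hQa]
  have hda : (d - c₁) ^ 2 > 0 := by
    have := sub_ne_zero.mpr hne
    positivity
  nlinarith [mul_pos hapos hda, mul_pos (mul_pos hapos hda) hc,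
    mul_nonneg (mul_pos hapos hda).le (sq_nonneg d),
    mul_nonneg (mul_pos hapos hda).le (mul_nonneg (mul_nonneg hd hapos.le) (by norm_num : (0:ℝ) ≤ 2)),
    mul_pos (mul_pos hapos hda) (mul_pos hapos hapos),
    mul_pos (mul_pos hapos hda) (mul_pos hh hh), key,
    mul_nonneg hd hapos.le]
end

section
/- Let c₂ > 0, H > 0, w ∈ ℝ², and T > 0. Define c₁ = sqrt( ( −(2H² + c₂) + sqrt(16H⁴ + 16c₂H² + c₂²) ) / 6 ) and D_u = (2c₂/ln 2) · c₁ / ((c₁² + H²)(c₁² + H² + c₂)). Let p₀,…,p_N ∈ ℝ² be horizontal waypoints and t₁,…,t_N > 0 durations with Σ_{n=1}^N t_n = T, let p : [0, T] → ℝ² be the associated piecewise-linear trajectory, and suppose ‖p_n − p_{n−1}‖ ≤ Δ for all n = 1,…,N for some Δ > 0. Then | (1/T)∫₀^T log₂(1 + c₂/(‖p(t) − w‖² + H²)) dt − (1/T) Σ_{n=1}^N t_n log₂(1 + c₂/(‖p_n − w‖² + H²)) | ≤ (1/2) · D_u · Δ. -/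
open MeasureTheory

private lemma key_ineq' (c₂ H c d : ℝ) (hc : 0 < c₂) (hH : 0 < H) (hc0 : 0 ≤ c)
    (hcc : 3*c^4 + (2*H^2+c₂)*c^2 = H^4 + c₂*H^2) :
    d * ((c^2+H^2)*(c^2+H^2+c₂)) ≤ c * ((d^2+H^2)*(d^2+H^2+c₂)) := by
  have hid : c * ((d^2+H^2)*(d^2+H^2+c₂)) - d * ((c^2+H^2)*(c^2+H^2+c₂))
      = c*(d-c)^2*((d+c)^2+2*c^2+2*H^2+c₂) := by
    linear_combination (d - c) * hcc
  nlinarith [mul_nonneg (mul_nonneg hc0 (sq_nonneg (d-c)))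
    (by positivity : (0:ℝ) ≤ (d+c)^2+2*c^2+2*H^2+c₂)]

private lemma G_deriv' (c₂ H : ℝ) (hc : 0 < c₂) (hH : 0 < H) (s : ℝ) :
    HasDerivAt (fun s : ℝ => (Real.log (s^2+H^2+c₂) - Real.log (s^2+H^2)) / Real.log 2)
      ((2*s/(s^2+H^2+c₂) - 2*s/(s^2+H^2)) / Real.log 2) s := by
  have hA : (0:ℝ) < s^2+H^2 := by positivity
  have hB : (0:ℝ) < s^2+H^2+c₂ := by positivity
  have h1 : HasDerivAt (fun s : ℝ => s^2+H^2+c₂) (2*s) s := by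
    simpa [mul_comm] using ((hasDerivAt_pow 2 s).add_const (H^2)).add_const c₂
  have h2 : HasDerivAt (fun s : ℝ => s^2+H^2) (2*s) s := by
    simpa [mul_comm] using (hasDerivAt_pow 2 s).add_const (H^2)
  exact ((h1.log hB.ne').sub (h2.log hA.ne')).div_const _

private lemma G_lip' (c₂ H Du c₁ : ℝ) (hc : 0 < c₂) (hH : 0 < H) (hc0 : 0 ≤ c₁)
    (hcc : 3*c₁^4 + (2*H^2+c₂)*c₁^2 = H^4 + c₂*H^2)
    (hDu : Du = (2 * c₂ / Real.log 2) * c₁ / ((c₁ ^ 2 + H ^ 2) * (c₁ ^ 2 + H ^ 2 + c₂)))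
    (a b : ℝ) :
    |(Real.log (a^2+H^2+c₂) - Real.log (a^2+H^2)) / Real.log 2 -
      (Real.log (b^2+H^2+c₂) - Real.log (b^2+H^2)) / Real.log 2| ≤ Du * |a - b| := by
  have hlog2 : (0:ℝ) < Real.log 2 := Real.log_pos (by norm_num)
  have key : ∀ s : ℝ, |(2*s/(s^2+H^2+c₂) - 2*s/(s^2+H^2)) / Real.log 2| ≤ Du := by
    intro s
    have hA : (0:ℝ) < s^2+H^2 := by positivity
    have hB : (0:ℝ) < s^2+H^2+c₂ := by positivity
    have h1 : (2*s/(s^2+H^2+c₂) - 2*s/(s^2+H^2)) / Real.log 2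
        = -(2 * |s|  * c₂/((s^2+H^2)*(s^2+H^2+c₂)) / Real.log 2)
        ∨ (2*s/(s^2+H^2+c₂) - 2*s/(s^2+H^2)) / Real.log 2
        = (2 * |s|  * c₂/((s^2+H^2)*(s^2+H^2+c₂)) / Real.log 2) := by
      rcases abs_choice s with h | h <;> [left; right] <;> rw [h] <;> (field_simp; ring)
    have h2 := key_ineq' c₂ H c₁ |s| hc hH hc0 hcc
    rw [sq_abs] at h2
    have hratio : |s|/((s^2+H^2)*(s^2+H^2+c₂)) ≤ c₁/((c₁^2+H^2)*(c₁^2+H^2+c₂)) := by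
      rw [div_le_div_iff₀ (by positivity) (by positivity)]; linarith
    have hfin : 2 * |s|  * c₂/((s^2+H^2)*(s^2+H^2+c₂)) / Real.log 2 ≤ Du := by
      calc 2 * |s|  * c₂/((s^2+H^2)*(s^2+H^2+c₂)) / Real.log 2
          = (2*c₂/Real.log 2) * (|s|/((s^2+H^2)*(s^2+H^2+c₂))) := by ring
        _ ≤ (2*c₂/Real.log 2) * (c₁/((c₁^2+H^2)*(c₁^2+H^2+c₂))) := by
            apply mul_le_mul_of_nonneg_left hratio
            positivity
        _ = Du := by rw [hDu]; ring
    have hnn : (0:ℝ) ≤ 2 * |s|  * c₂/((s^2+H^2)*(s^2+H^2+c₂)) / Real.log 2 := by positivity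
    rcases h1 with h | h <;> rw [h]
    · rwa [abs_neg, abs_of_nonneg hnn]
    · rwa [abs_of_nonneg hnn]
  have := Convex.norm_image_sub_le_of_norm_hasDerivWithin_le (s := Set.univ)
    (f := fun s : ℝ => (Real.log (s^2+H^2+c₂) - Real.log (s^2+H^2)) / Real.log 2)
    (f' := fun s => (2*s/(s^2+H^2+c₂) - 2*s/(s^2+H^2)) / Real.log 2)
    (fun x _ => (G_deriv' c₂ H hc hH x).hasDerivWithinAt)
    (fun x _ => by rw [Real.norm_eq_abs]; exact key x) convex_univ
    (Set.mem_univ b) (Set.mem_univ a)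
  simpa [Real.norm_eq_abs] using this

private lemma sum_Icc_one' (f : ℕ → ℝ) (N : ℕ) :
    ∑ n ∈ Finset.Icc 1 N, f n = ∑ k ∈ Finset.range N, f (k+1) := by
  induction N with
  | zero => simp
  | succ n ih =>
      rw [Finset.sum_range_succ, ← ih, Finset.sum_Icc_succ_top (by omega : 1 ≤ n+1)]

private lemma seg_bound' (Du Δ τv α : ℝ) (hτ : 0 < τv) (hΔ : 0 < Δ) (hDu : 0 ≤ Du)
    (R : EuclideanSpace ℝ (Fin 2) → ℝ)
    (hRlip : ∀ x y, |R x - R y| ≤ Du * ‖x - y‖)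
    (q b : EuclideanSpace ℝ (Fin 2)) (hqb : ‖b - q‖ ≤ Δ)
    (f : ℝ → ℝ)
    (hint : IntervalIntegrable f volume α (α+τv))
    (hf : ∀ t ∈ Set.Icc α (α+τv), f t = R (q + ((t - α)/τv) • (b - q))) :
    |(∫ t in α..(α+τv), f t) - τv * R b| ≤ Du * Δ * τv / 2 := by
  have hab : α ≤ α + τv := by linarith
  have hconst : (∫ (_ : ℝ) in α..(α+τv), R b) = τv * R b := by
    rw [intervalIntegral.integral_const, smul_eq_mul]; ring_nf
  have h1 : (∫ t in α..(α+τv), f t) - τv * R b = ∫ t in α..(α+τv), (f t - R b) := by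
    rw [intervalIntegral.integral_sub hint intervalIntegrable_const, hconst]
  rw [h1]
  have hbound : ∀ t ∈ Set.Icc α (α+τv), |f t - R b| ≤ Du * Δ * ((α + τv - t)/τv) := by
    intro t ht
    rw [hf t ht]
    have h3 : q + ((t - α)/τv) • (b - q) - b = (((t-α)/τv) - 1) • (b - q) := by module
    have hs1 : (t-α)/τv ≤ 1 := by rw [div_le_one hτ]; linarith [ht.2]
    have h4 : ‖q + ((t - α)/τv) • (b - q) - b‖ = (1 - (t-α)/τv) * ‖b - q‖ := by
      rw [h3, norm_smul, Real.norm_eq_abs, abs_of_nonpos (by linarith), neg_sub]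
    have hXnn : (0:ℝ) ≤ (α+τv-t)/τv := div_nonneg (by linarith [ht.2]) hτ.le
    have h5 : (1 - (t-α)/τv) = (α+τv-t)/τv := by field_simp; ring
    calc |R (q + ((t - α)/τv) • (b - q)) - R b|
        ≤ Du * ‖q + ((t - α)/τv) • (b - q) - b‖ := hRlip _ _
      _ = Du * (((α+τv-t)/τv) * ‖b - q‖) := by rw [h4, h5]
      _ ≤ Du * (((α+τv-t)/τv) * Δ) := by
          apply mul_le_mul_of_nonneg_left (mul_le_mul_of_nonneg_left hqb hXnn) hDu
      _ = Du * Δ * ((α + τv - t)/τv) := by ring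
  have e0 : ∀ t : ℝ, Du*Δ*((α+τv-t)/τv) = (Du*Δ/τv)*(α+τv) - (Du*Δ/τv)*t := by
    intro t; field_simp
  have hgint : IntervalIntegrable (fun t : ℝ => Du*Δ*((α+τv-t)/τv)) volume α (α+τv) := by
    apply Continuous.intervalIntegrable; continuity
  have hintval : (∫ t in α..(α+τv), Du*Δ*((α+τv-t)/τv)) = Du * Δ * τv / 2 := by
    simp only [e0]
    rw [intervalIntegral.integral_sub intervalIntegrable_const
      (by apply Continuous.intervalIntegrable; continuity),
      intervalIntegral.integral_const, intervalIntegral.integral_const_mul, integral_id,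
      smul_eq_mul]
    field_simp
    ring
  calc |∫ t in α..(α+τv), (f t - R b)|
      ≤ ∫ t in α..(α+τv), |f t - R b| :=
        intervalIntegral.abs_integral_le_integral_abs hab
    _ ≤ ∫ t in α..(α+τv), Du*Δ*((α+τv-t)/τv) := by
        apply intervalIntegral.integral_mono_on hab
          ((hint.sub intervalIntegrable_const).abs) hgint hbound
    _ = Du * Δ * τv / 2 := hintval

/-- Example 1 of the paper. For a UAV flying at fixed
altitude `H` along a piecewise-linear horizontal trajectory with segment
lengths at most `Δ`, the error between the exact average achievable
line-of-sight rate and its path-discretized finite-sum approximation is at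
most `(1/2)·D_u·Δ`, where `D_u` is the gradient-norm bound from Appendix B. -/
theorem los_rate_finite_sum_error_bound
    (c₂ H : ℝ) (hc : 0 < c₂) (hH : 0 < H)
    (w : EuclideanSpace ℝ (Fin 2)) (T : ℝ) (hT0 : 0 < T)
    (c₁ : ℝ)
    (hc₁ : c₁ = Real.sqrt
      ((-(2 * H ^ 2 + c₂) + Real.sqrt (16 * H ^ 4 + 16 * c₂ * H ^ 2 + c₂ ^ 2)) / 6))
    (Du : ℝ)
    (hDu : Du = (2 * c₂ / Real.log 2) * c₁ /
      ((c₁ ^ 2 + H ^ 2) * (c₁ ^ 2 + H ^ 2 + c₂)))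
    (N : ℕ) (hN : 1 ≤ N)
    (p' : ℕ → EuclideanSpace ℝ (Fin 2)) (τ : ℕ → ℝ)
    (hτ : ∀ n, 1 ≤ n → n ≤ N → 0 < τ n)
    (hsum : T = ∑ n ∈ Finset.Icc 1 N, τ n)
    (p : ℝ → EuclideanSpace ℝ (Fin 2))
    (hp : ∀ n, 1 ≤ n → n ≤ N →
      ∀ t ∈ Set.Icc (∑ m ∈ Finset.Icc 1 (n - 1), τ m) (∑ m ∈ Finset.Icc 1 n, τ m),
        p t = p' (n - 1) +
          ((t - ∑ m ∈ Finset.Icc 1 (n - 1), τ m) / τ n) • (p' n - p' (n - 1)))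
    (Δ : ℝ) (hΔ : 0 < Δ)
    (hseg : ∀ n, 1 ≤ n → n ≤ N → ‖p' n - p' (n - 1)‖ ≤ Δ) :
    |(1 / T) * (∫ t in (0 : ℝ)..T, Real.logb 2 (1 + c₂ / (‖p t - w‖ ^ 2 + H ^ 2))) -
        (1 / T) * ∑ n ∈ Finset.Icc 1 N,
          τ n * Real.logb 2 (1 + c₂ / (‖p' n - w‖ ^ 2 + H ^ 2))| ≤
      (1 / 2) * Du * Δ := by
  have hlog2 : (0:ℝ) < Real.log 2 := Real.log_pos (by norm_num)
  -- c₁ facts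
  set S := Real.sqrt (16 * H ^ 4 + 16 * c₂ * H ^ 2 + c₂ ^ 2) with hS
  have hS0 : S^2 = 16 * H ^ 4 + 16 * c₂ * H ^ 2 + c₂ ^ 2 := Real.sq_sqrt (by positivity)
  have hSge : 2 * H ^ 2 + c₂ ≤ S := by
    have h0 : 2 * H ^ 2 + c₂ = Real.sqrt ((2 * H ^ 2 + c₂)^2) :=
      (Real.sqrt_sq (by positivity)).symm
    rw [hS, h0]
    apply Real.sqrt_le_sqrt
    nlinarith [pow_pos hH 4, mul_pos hc (pow_pos hH 2)]
  have hE0 : (0:ℝ) ≤ (-(2 * H ^ 2 + c₂) + S) / 6 := by linarith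
  have hc1sq : c₁^2 = (-(2 * H ^ 2 + c₂) + S) / 6 := by
    rw [hc₁]; exact Real.sq_sqrt hE0
  have hc10 : 0 ≤ c₁ := hc₁ ▸ Real.sqrt_nonneg _
  have hSeq : 6 * c₁^2 + (2 * H ^ 2 + c₂) = S := by linarith
  have hcc : 3*c₁^4 + (2*H^2+c₂)*c₁^2 = H^4 + c₂*H^2 := by
    have h2 : (6 * c₁^2 + (2 * H ^ 2 + c₂))^2 = 16 * H ^ 4 + 16 * c₂ * H ^ 2 + c₂ ^ 2 := by
      rw [hSeq]; exact hS0
    linear_combination h2 / 12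
  have hDu0 : 0 ≤ Du := by
    rw [hDu]
    apply div_nonneg (mul_nonneg (div_nonneg (by positivity) hlog2.le) hc10) (by positivity)
  -- the rate function
  set G : ℝ → ℝ := fun s => (Real.log (s^2+H^2+c₂) - Real.log (s^2+H^2)) / Real.log 2 with hG
  set R : EuclideanSpace ℝ (Fin 2) → ℝ :=
    fun x => Real.logb 2 (1 + c₂ / (‖x - w‖ ^ 2 + H ^ 2)) with hR
  have hRG : ∀ x, R x = G ‖x - w‖ := by
    intro x
    have hA : (0:ℝ) < ‖x - w‖^2 + H^2 := by positivity
    have h1 : 1 + c₂ / (‖x - w‖ ^ 2 + H ^ 2)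
        = (‖x - w‖^2 + H^2 + c₂) / (‖x - w‖^2 + H^2) := by field_simp
    rw [hR, hG]
    simp only [h1, Real.logb]
    rw [Real.log_div (by positivity) hA.ne']
  have hRlip : ∀ x y, |R x - R y| ≤ Du * ‖x - y‖ := by
    intro x y
    rw [hRG x, hRG y]
    calc |G ‖x - w‖ - G ‖y - w‖| ≤ Du * |‖x - w‖ - ‖y - w‖| :=
          G_lip' c₂ H Du c₁ hc hH hc10 hcc hDu _ _
      _ ≤ Du * ‖x - y‖ := by
          apply mul_le_mul_of_nonneg_left _ hDu0
          have h := abs_norm_sub_norm_le (x - w) (y - w)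
          rwa [sub_sub_sub_cancel_right] at h
  have hGcont : Continuous G := by
    apply Continuous.div_const
    apply Continuous.sub
    · exact Continuous.log (by fun_prop) (fun s => by positivity)
    · exact Continuous.log (by fun_prop) (fun s => by positivity)
  have hRcont : Continuous R := by
    have h : Continuous fun x : EuclideanSpace ℝ (Fin 2) => G ‖x - w‖ :=
      hGcont.comp ((continuous_id.sub continuous_const).norm)
    rw [show R = fun x => G ‖x - w‖ from funext hRG]
    exact h
  -- cumulative times
  set a : ℕ → ℝ := fun k => ∑ m ∈ Finset.Icc 1 k, τ m with ha
  have ha0 : a 0 = 0 := by simp [ha]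
  have haN : a N = T := hsum.symm
  have hstep : ∀ k : ℕ, a (k+1) = a k + τ (k+1) := by
    intro k
    simp only [ha]
    rw [Finset.sum_Icc_succ_top (by omega : 1 ≤ k+1)]
  have hple : ∀ k, k < N → a k ≤ a (k+1) := by
    intro k hk
    rw [hstep k]
    linarith [hτ (k+1) (by omega) (by omega)]
  -- per-segment form of p
  have hpseg : ∀ k, k < N → ∀ t ∈ Set.Icc (a k) (a (k+1)),
      p t = p' k + ((t - a k)/τ (k+1)) • (p' (k+1) - p' k) := by
    intro k hk t ht
    have := hp (k+1) (by omega) (by omega) t (by simpa [ha, Nat.add_sub_cancel] using ht)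
    simpa [Nat.add_sub_cancel, ha] using this
  -- integrability
  have hseg_int : ∀ k, k < N →
      IntervalIntegrable (fun t => R (p t)) volume (a k) (a (k+1)) := by
    intro k hk
    have hq : Continuous fun t : ℝ => p' k + ((t - a k)/τ (k+1)) • (p' (k+1) - p' k) :=
      continuous_const.add
        (((continuous_id.sub continuous_const).div_const _).smul continuous_const)
    have hcont : ContinuousOn (fun t => R (p t)) (Set.Icc (a k) (a (k+1))) := by
      apply ((hRcont.comp hq).continuousOn).congr
      intro t ht
      simp only [Function.comp]
      rw [hpseg k hk t ht]
    apply ContinuousOn.intervalIntegrable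
    rwa [Set.uIcc_of_le (hple k hk)]
  -- splitting the integral
  have hsplit : ∑ k ∈ Finset.range N, (∫ t in (a k)..(a (k+1)), R (p t))
      = ∫ t in (0:ℝ)..T, R (p t) := by
    have h := intervalIntegral.sum_integral_adjacent_intervals hseg_int
    rwa [ha0, haN] at h
  -- per-segment error bound
  have hsegbd : ∀ k, k < N →
      |(∫ t in (a k)..(a (k+1)), R (p t)) - τ (k+1) * R (p' (k+1))|
        ≤ Du * Δ * τ (k+1) / 2 := by
    intro k hk
    have hτk : 0 < τ (k+1) := hτ (k+1) (by omega) (by omega)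
    have h := seg_bound' Du Δ (τ (k+1)) (a k) hτk hΔ hDu0 R hRlip (p' k) (p' (k+1))
      (by simpa [Nat.add_sub_cancel] using hseg (k+1) (by omega) (by omega))
      (fun t => R (p t))
      (hstep k ▸ hseg_int k hk)
      (fun t ht => by show R (p t) = _; rw [hpseg k hk t (by rwa [hstep k])])
    rwa [← hstep k] at h
  -- assemble
  have hgoal : |(1 / T) * (∫ t in (0 : ℝ)..T, R (p t)) -
      (1 / T) * ∑ n ∈ Finset.Icc 1 N, τ n * R (p' n)| ≤ (1 / 2) * Du * Δ := by
    rw [← hsplit, sum_Icc_one' (fun n => τ n * R (p' n)) N, ← mul_sub, abs_mul,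
      abs_of_pos (by positivity : (0:ℝ) < 1/T), ← Finset.sum_sub_distrib]
    have h1 : |∑ k ∈ Finset.range N,
        ((∫ t in (a k)..(a (k+1)), R (p t)) - τ (k+1) * R (p' (k+1)))|
        ≤ ∑ k ∈ Finset.range N, (Du * Δ * τ (k+1) / 2) :=
      (Finset.abs_sum_le_sum_abs _ _).trans
        (Finset.sum_le_sum fun k hk => hsegbd k (Finset.mem_range.mp hk))
    have h2 : ∑ k ∈ Finset.range N, (Du * Δ * τ (k+1) / 2)
        = (Du * Δ / 2) * T := by
      rw [hsum, sum_Icc_one' τ N, Finset.mul_sum]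
      apply Finset.sum_congr rfl
      intro k _
      ring
    calc (1/T) * |∑ k ∈ Finset.range N,
          ((∫ t in (a k)..(a (k+1)), R (p t)) - τ (k+1) * R (p' (k+1)))|
        ≤ (1/T) * ((Du * Δ / 2) * T) := by
          apply mul_le_mul_of_nonneg_left (h2 ▸ h1) (by positivity)
      _ = (1/2) * Du * Δ := by field_simp
  exact hgoal
end
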